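/- arXiv:1006.0912 — 5 statements merged into one kernel-verified Lean document; each statement's English description precedes it below -/
import Mathlib

section
/- Every endomorphism T of an object V in Vect_{F_1} decomposes V into a direct sum V = ⊕_j V_j with T(V_j) ⊆ V_j, such that each restriction T|_{V_j} is equivalent (conjugate by a pointed-set isomorphism) to either the nilpotent Jordan block N_m on {0,1,...,m} given by N_m(k) = k-1 (with N_m(1)=0), or the cyclic permutation C_m given by C_m(k) = k-1 for k ≥ 2 and C_m(1) = m, where m = |V_j| - 1. This decomposition is unique up to reordering of the summands. -/
/-- A morphism of pointed sets (endomorphism condition) in `Vect_{F₁}`. -/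
def IsF1End {V : Type} [Zero V] (T : V → V) : Prop :=
  T 0 = 0 ∧ ∀ x y : V, T x = T y → T x ≠ 0 → x = y

/-- The model block on `{0, 1, …, m}` (as natural numbers):
`true` gives the nilpotent Jordan block `N_m : k ↦ k - 1` (with `N_m 1 = 0`);
`false` gives the cyclic block `C_m : k ↦ k - 1` for `k ≥ 2`, `C_m 1 = m`, `C_m 0 = 0`. -/
def modelBlock (b : Bool) (m : ℕ) : ℕ → ℕ :=
  if b then fun k => k - 1
  else fun k => if k = 0 then 0 else if k = 1 then m else k - 1

/-- `T` decomposes according to the list of blocks `l` (each entry `(b, m)` a block of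
dimension `m ≥ 1` of nilpotent (`b = true`) or cyclic (`b = false`) type): there are
pointed embeddings `e j : {0, …, m_j} → V` intertwining `T` with the model block, whose
nonzero parts partition `V \ {0}`. -/
def IsJordanDecomp {V : Type} [Zero V] (T : V → V) (l : List (Bool × ℕ)) : Prop :=
  ∃ e : Fin l.length → ℕ → V,
    (∀ j, 1 ≤ (l.get j).2) ∧
    (∀ j, e j 0 = 0) ∧
    (∀ j, Set.InjOn (e j) (Set.Iic (l.get j).2)) ∧
    (∀ j, ∀ k ≤ (l.get j).2, T (e j k) = e j (modelBlock (l.get j).1 (l.get j).2 k)) ∧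
    (∀ v : V, v ≠ 0 →
      ∃! jk : Fin l.length × ℕ, 1 ≤ jk.2 ∧ jk.2 ≤ (l.get jk.1).2 ∧ e jk.1 jk.2 = v)


/-!
A nonzero point either reaches `0` or is periodic, and, `T` being injective away from its
kernel, a nonzero point has at most one preimage. Hence `V \ {0}` splits into chains, which
start at a point without preimage and run into `0`, and into cycles. Each block is generated
by the start of its chain or by a chosen point of its cycle, and its dimension is the first
time the generator returns to `0` or to itself.

The blocks of any decomposition are determined by `T`: the block of `v` consists of the nonzero
points whose forward orbits meet that of `v` away from `0`. A block is nilpotent iff `T` kills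
one of its points, and its dimension is its cardinality, so the multiset of block types is an
invariant of `T`.
-/

open Function Set

theorem modelBlock_zero (b : Bool) (m : ℕ) : modelBlock b m 0 = 0 := by
  cases b <;> rfl

theorem modelBlock_of_two_le {b : Bool} {m k : ℕ} (hk : 2 ≤ k) : modelBlock b m k = k - 1 := by
  cases b <;> simp only [modelBlock, Bool.false_eq_true, ↓reduceIte]
  · split_ifs <;> omega

theorem modelBlock_true_one (m : ℕ) : modelBlock true m 1 = 0 := rfl

theorem modelBlock_false_one (m : ℕ) : modelBlock false m 1 = m := rfl

theorem mapsTo_modelBlock {b : Bool} {m : ℕ} : MapsTo (modelBlock b m) (Iic m) (Iic m) := by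
  intro k hk
  simp only [mem_Iic] at hk ⊢
  cases b <;> simp only [modelBlock, Bool.false_eq_true, ↓reduceIte] <;> try split_ifs
  all_goals omega

theorem one_le_modelBlock_false {m k : ℕ} (hm : 1 ≤ m) (hk : 1 ≤ k) : 1 ≤ modelBlock false m k := by
  simp only [modelBlock, Bool.false_eq_true, ↓reduceIte]
  split_ifs <;> omega

namespace Function

variable {α : Type*} {f : α → α}

theorem iterate_mem_periodicPts {x : α} (hx : x ∈ periodicPts f) (n : ℕ) :
    f^[n] x ∈ periodicPts f := by
  obtain ⟨p, hp, hpx⟩ := hx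
  exact mk_mem_periodicPts hp (hpx.apply_iterate n)

theorem exists_iterate_iterate_eq {x : α} (hx : x ∈ periodicPts f) (n : ℕ) :
    ∃ k, f^[k] (f^[n] x) = x := by
  have : x ∈ periodicOrbit f (f^[n] x) := by
    rw [periodicOrbit_apply_iterate_eq hx]; exact self_mem_periodicOrbit hx
  exact (mem_periodicOrbit_iff (iterate_mem_periodicPts hx n)).1 this

theorem exists_iterate_eq_of_notMem_periodicPts [Finite α] {v : α} (hv : v ∉ periodicPts f) :
    ∃ t, (∀ w, f w ≠ t) ∧ ∃ i, f^[i] t = v := by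
  by_contra! htop
  have hchain : ∀ n, ∃ w, f^[n] w = v := by
    intro n
    induction n with
    | zero => exact ⟨v, rfl⟩
    | succ n ih =>
      obtain ⟨w, hw⟩ := ih
      obtain ⟨u, hu⟩ : ∃ u, f u = w := by
        by_contra! hu
        exact htop w hu n hw
      exact ⟨u, by rw [iterate_succ_apply, hu, hw]⟩
  obtain ⟨w, hw⟩ := hchain (Nat.card α)
  have hinj : Injective fun j : Fin (Nat.card α + 1) => f^[j] w := by
    intro a b hab
    by_contra hne
    wlog hlt : (a : ℕ) < b generalizing a b
    · exact this hab.symm (Ne.symm hne) (by omega)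
    have hper : f^[a] w ∈ periodicPts f :=
      mk_mem_periodicPts (n := b - a) (by omega) <| by
        rw [IsPeriodicPt, IsFixedPt, ← iterate_add_apply, Nat.sub_add_cancel hlt.le]
        exact hab.symm
    apply hv
    rw [← hw, ← Nat.sub_add_cancel (show (a : ℕ) ≤ Nat.card α by omega), iterate_add_apply]
    exact iterate_mem_periodicPts hper _
  have := Nat.card_le_card_of_injective _ hinj
  rw [Nat.card_fin] at this
  omega

end Function

namespace IsF1End

variable {V : Type} [Zero V] {T : V → V}

theorem iterate_map_zero (hT : IsF1End T) (n : ℕ) : T^[n] 0 = 0 :=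
  iterate_fixed hT.1 n

theorem eq_of_iterate_eq (hT : IsF1End T) {n : ℕ} {x y : V} (h : T^[n] x = T^[n] y)
    (h0 : T^[n] x ≠ 0) : x = y := by
  induction n generalizing x y with
  | zero => exact h
  | succ n ih =>
    rw [iterate_succ_apply, iterate_succ_apply] at h
    rw [iterate_succ_apply] at h0
    refine hT.2 x y (ih h h0) fun hx => h0 ?_
    rw [hx, hT.iterate_map_zero]

theorem iterate_ne_zero_of_mem_periodicPts (hT : IsF1End T) {x : V} (hx : x ∈ periodicPts T)
    (hx0 : x ≠ 0) (n : ℕ) : T^[n] x ≠ 0 := by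
  obtain ⟨k, hk⟩ := exists_iterate_iterate_eq hx n
  intro h
  rw [h, hT.iterate_map_zero] at hk
  exact hx0 hk.symm

/-- Nonzero points have at most one preimage, so the only way into a cycle is around it. -/
theorem exists_iterate_eq_of_iterate_eq_of_mem_periodicPts (hT : IsF1End T) {x w : V}
    (hx : x ∈ periodicPts T) (hx0 : x ≠ 0) {s : ℕ} (h : T^[s] w = x) : ∃ k, T^[k] x = w := by
  obtain ⟨k, hk⟩ := exists_iterate_iterate_eq hx s
  refine ⟨k, hT.eq_of_iterate_eq (n := s) ?_ ?_⟩
  · rw [← iterate_add_apply, add_comm, iterate_add_apply, hk, h]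
  · rw [← iterate_add_apply, add_comm, iterate_add_apply, hk]; exact hx0

theorem exists_iterate_eq_zero_or_self [Finite V] (hT : IsF1End T) (x : V) :
    ∃ n, 0 < n ∧ (T^[n] x = 0 ∨ T^[n] x = x) := by
  obtain ⟨i, j, hij, h⟩ := Finite.exists_ne_map_eq_of_infinite fun n : ℕ => T^[n] x
  wlog hlt : i < j generalizing i j
  · exact this j i hij.symm h.symm (by omega)
  by_cases h0 : T^[i] x = 0
  · exact ⟨j, by omega, Or.inl (by rw [← h, h0])⟩
  refine ⟨j - i, by omega, Or.inr (hT.eq_of_iterate_eq (n := i) ?_ h0).symm⟩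
  rw [← iterate_add_apply, Nat.add_sub_cancel' hlt.le, h]

end IsF1End

section Blocks

variable {V : Type} [Zero V] {T : V → V}

noncomputable def blockLen (T : V → V) (x : V) : ℕ :=
  sInf {n | 0 < n ∧ (T^[n] x = 0 ∨ T^[n] x = x)}

theorem blockLen_spec [Finite V] (hT : IsF1End T) (x : V) :
    0 < blockLen T x ∧ (T^[blockLen T x] x = 0 ∨ T^[blockLen T x] x = x) :=
  Nat.sInf_mem (hT.exists_iterate_eq_zero_or_self x)

theorem iterate_ne_of_lt_blockLen {x : V} {i : ℕ} (hi0 : 0 < i) (hi : i < blockLen T x) :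
    T^[i] x ≠ 0 ∧ T^[i] x ≠ x := by
  have := Nat.notMem_of_lt_sInf hi
  simp only [mem_ofPred_eq, not_and, not_or] at this
  exact this hi0

theorem iterate_ne_zero_of_lt_blockLen {x : V} (hx : x ≠ 0) {i : ℕ} (hi : i < blockLen T x) :
    T^[i] x ≠ 0 := by
  rcases Nat.eq_zero_or_pos i with rfl | hi0
  · exact hx
  · exact (iterate_ne_of_lt_blockLen hi0 hi).1

theorem injOn_iterate_blockLen (hT : IsF1End T) {x : V} (hx : x ≠ 0) :
    InjOn (fun i => T^[i] x) (Iio (blockLen T x)) := by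
  have key : ∀ i j, i < j → j < blockLen T x → T^[i] x ≠ T^[j] x := by
    intro i j hij hj h
    refine (iterate_ne_of_lt_blockLen (T := T) (i := j - i) (by omega) (by omega)).2
      (hT.eq_of_iterate_eq (n := i) ?_ (iterate_ne_zero_of_lt_blockLen hx (by omega))).symm
    rw [← iterate_add_apply, Nat.add_sub_cancel' hij.le, h]
  intro i hi j hj h
  simp only [mem_Iio] at hi hj
  rcases lt_trichotomy i j with hij | rfl | hji
  exacts [absurd h (key i j hij hj), rfl, absurd h.symm (key j i hji hi)]

noncomputable def blockEmb (T : V → V) (x : V) (k : ℕ) : V :=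
  if k = 0 then 0 else T^[blockLen T x - k] x

open Classical in
noncomputable def blockType (T : V → V) (x : V) : Bool :=
  decide (T^[blockLen T x] x = 0)

theorem blockEmb_zero (T : V → V) (x : V) : blockEmb T x 0 = 0 := if_pos rfl

theorem blockEmb_of_ne_zero {x : V} {k : ℕ} (hk : k ≠ 0) :
    blockEmb T x k = T^[blockLen T x - k] x := if_neg hk

theorem blockEmb_ne_zero {x : V} (hx : x ≠ 0) {k : ℕ} (hk0 : k ≠ 0) (hk : k ≤ blockLen T x) :
    blockEmb T x k ≠ 0 := by
  rw [blockEmb_of_ne_zero hk0]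
  exact iterate_ne_zero_of_lt_blockLen hx (by omega)

theorem injOn_blockEmb (hT : IsF1End T) {x : V} (hx : x ≠ 0) :
    InjOn (blockEmb T x) (Iic (blockLen T x)) := by
  intro k hk k' hk' h
  simp only [mem_Iic] at hk hk'
  rcases Nat.eq_zero_or_pos k with rfl | hk0 <;> rcases Nat.eq_zero_or_pos k' with rfl | hk0'
  · rfl
  · exact absurd (h.symm.trans (blockEmb_zero T x)) (blockEmb_ne_zero hx hk0'.ne' hk')
  · exact absurd (h.trans (blockEmb_zero T x)) (blockEmb_ne_zero hx hk0.ne' hk)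
  · rw [blockEmb_of_ne_zero hk0.ne', blockEmb_of_ne_zero hk0'.ne'] at h
    have := injOn_iterate_blockLen hT hx (mem_Iio.2 (by omega : blockLen T x - k < _))
      (mem_Iio.2 (by omega : blockLen T x - k' < _)) h
    omega

theorem map_blockEmb [Finite V] (hT : IsF1End T) {x : V} (hx : x ≠ 0) {k : ℕ}
    (hk : k ≤ blockLen T x) :
    T (blockEmb T x k) = blockEmb T x (modelBlock (blockType T x) (blockLen T x) k) := by
  obtain ⟨hpos, hret⟩ := blockLen_spec hT x
  rcases Nat.lt_trichotomy k 1 with hk0 | rfl | hk2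
  · rw [Nat.lt_one_iff.1 hk0, modelBlock_zero, blockEmb_zero, hT.1]
  · rw [blockEmb_of_ne_zero one_ne_zero, ← iterate_succ_apply' T, Nat.succ_eq_add_one,
      Nat.sub_one_add_one hpos.ne']
    rcases hret with h0 | hself
    · rw [show blockType T x = true by simp [blockType, h0], modelBlock_true_one, blockEmb_zero,
        h0]
    · rw [show blockType T x = false by simp [blockType, hself, hx], modelBlock_false_one,
        blockEmb_of_ne_zero hpos.ne', Nat.sub_self, iterate_zero_apply, hself]
  · rw [modelBlock_of_two_le hk2, blockEmb_of_ne_zero (by omega), blockEmb_of_ne_zero (by omega),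
      ← iterate_succ_apply' T]
    congr 1
    omega

/-- The predicate depends only on the cycle, so all points of a cycle get the same
representative (`cycleRep_iterate`). -/
noncomputable def cycleRep (T : V → V) (x : V) : V :=
  Classical.epsilon (· ∈ periodicOrbit T x)

theorem cycleRep_iterate {x : V} (hx : x ∈ periodicPts T) (n : ℕ) :
    cycleRep T (T^[n] x) = cycleRep T x := by
  simp only [cycleRep, periodicOrbit_apply_iterate_eq hx]

theorem exists_iterate_eq_cycleRep {x : V} (hx : x ∈ periodicPts T) :
    ∃ n, T^[n] x = cycleRep T x :=
  (mem_periodicOrbit_iff hx).1 (Classical.epsilon_spec ⟨x, self_mem_periodicOrbit hx⟩)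

/-- The generators of the blocks: the starting point of a nilpotent chain, or the chosen
representative of a cycle. -/
def IsBlockGen (T : V → V) (g : V) : Prop :=
  g ≠ 0 ∧ ((∀ w, T w ≠ g) ∨ (g ∈ periodicPts T ∧ cycleRep T g = g))

theorem exists_isBlockGen_iterate_eq [Finite V] (hT : IsF1End T) {v : V} (hv : v ≠ 0) :
    ∃ g, IsBlockGen T g ∧ ∃ i < blockLen T g, T^[i] g = v := by
  by_cases hp : v ∈ periodicPts T
  · obtain ⟨n, hn⟩ := exists_iterate_eq_cycleRep hp
    set r := cycleRep T v
    have hr : r ∈ periodicPts T := hn ▸ iterate_mem_periodicPts hp n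
    have hr0 : r ≠ 0 := hn ▸ hT.iterate_ne_zero_of_mem_periodicPts hp hv n
    obtain ⟨k, hk⟩ := hT.exists_iterate_eq_of_iterate_eq_of_mem_periodicPts hr hr0 hn
    have hperiod : IsPeriodicPt T (blockLen T r) r :=
      (blockLen_spec hT r).2.resolve_left (hT.iterate_ne_zero_of_mem_periodicPts hr hr0 _)
    refine ⟨r, ⟨hr0, Or.inr ⟨hr, ?_⟩⟩, k % blockLen T r,
      Nat.mod_lt _ (blockLen_spec hT r).1, by rw [hperiod.iterate_mod_apply, hk]⟩
    rw [← hn, cycleRep_iterate hp]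
    exact hn.symm
  · obtain ⟨t, ht, i, hi⟩ := exists_iterate_eq_of_notMem_periodicPts hp
    have ht0 : t ≠ 0 := by rintro rfl; exact hv (hi ▸ hT.iterate_map_zero i)
    refine ⟨t, ⟨ht0, Or.inl ht⟩, i, ?_, hi⟩
    obtain ⟨hpos, hret⟩ := blockLen_spec hT t
    have hzero : T^[blockLen T t] t = 0 := hret.resolve_right fun hself => ht _ <| by
      rw [← iterate_succ_apply' T, Nat.succ_eq_add_one, Nat.sub_one_add_one hpos.ne', hself]
    by_contra! hle
    apply hv
    rw [← hi, ← Nat.sub_add_cancel hle, iterate_add_apply, hzero, hT.iterate_map_zero]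

theorem eq_of_isBlockGen_iterate_eq (hT : IsF1End T) {g g' : V} (hg : IsBlockGen T g)
    (hg' : IsBlockGen T g') {i i' : ℕ} (hi : i < blockLen T g) (hi' : i' < blockLen T g')
    (h : T^[i] g = T^[i'] g') : g = g' ∧ i = i' := by
  wlog hii : i ≤ i' generalizing g g' i i'
  · obtain ⟨rfl, rfl⟩ := this hg' hg hi' hi h.symm (by omega)
    exact ⟨rfl, rfl⟩
  suffices hgg : g = g' by
    subst hgg
    exact ⟨rfl, injOn_iterate_blockLen hT hg.1 hi hi' h⟩
  have hs : T^[i' - i] g' = g := hT.eq_of_iterate_eq (n := i)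
    (by rw [← iterate_add_apply, Nat.add_sub_cancel' hii, h])
    (by rw [← iterate_add_apply, Nat.add_sub_cancel' hii, ← h]
        exact iterate_ne_zero_of_lt_blockLen hg.1 hi)
  rcases hg.2 with htop | ⟨hgp, hgrep⟩
  · have hii' : i' - i = 0 := by
      by_contra hne
      refine htop (T^[i' - i - 1] g') ?_
      rw [← iterate_succ_apply' T, Nat.succ_eq_add_one, Nat.sub_one_add_one hne, hs]
    rwa [hii', iterate_zero_apply, eq_comm] at hs
  · obtain ⟨k, hk⟩ := hT.exists_iterate_eq_of_iterate_eq_of_mem_periodicPts hgp hg.1 hs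
    have hg'p : g' ∈ periodicPts T := hk ▸ iterate_mem_periodicPts hgp k
    obtain ⟨w, hw⟩ := periodicPts_subset_range hg'p
    have hg'rep : cycleRep T g' = g' := (hg'.2.resolve_left fun htop => htop w hw).2
    rw [← hg'rep, ← hk, cycleRep_iterate hgp, hgrep]

theorem existsUnique_blockEmb [Finite V] (hT : IsF1End T) {v : V} (hv : v ≠ 0) :
    ∃! gk : {g // IsBlockGen T g} × ℕ,
      1 ≤ gk.2 ∧ gk.2 ≤ blockLen T gk.1 ∧ blockEmb T gk.1 gk.2 = v := by
  obtain ⟨g, hg, i, hi, rfl⟩ := exists_isBlockGen_iterate_eq hT hv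
  refine ⟨(⟨g, hg⟩, blockLen T g - i), ?_, ?_⟩
  · refine ⟨by omega, by simp, ?_⟩
    rw [blockEmb_of_ne_zero (by omega), Nat.sub_sub_self hi.le]
  · rintro ⟨⟨g', hg'⟩, k⟩ ⟨hk1, hk, he⟩
    dsimp only at hk1 hk he
    rw [blockEmb_of_ne_zero (by omega)] at he
    obtain ⟨rfl, hik⟩ := eq_of_isBlockGen_iterate_eq hT hg' hg (by omega) hi he
    exact Prod.ext rfl (by dsimp only; omega)

end Blocks

theorem exists_isJordanDecomp_of_blocks {V ι : Type} [Zero V] [Finite ι] {T : V → V}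
    (b : ι → Bool) (m : ι → ℕ) (e : ι → ℕ → V) (hm : ∀ i, 1 ≤ m i) (h0 : ∀ i, e i 0 = 0)
    (hinj : ∀ i, InjOn (e i) (Iic (m i)))
    (hcomm : ∀ i, ∀ k ≤ m i, T (e i k) = e i (modelBlock (b i) (m i) k))
    (hcover : ∀ v, v ≠ 0 → ∃! ik : ι × ℕ, 1 ≤ ik.2 ∧ ik.2 ≤ m ik.1 ∧ e ik.1 ik.2 = v) :
    ∃ l, IsJordanDecomp T l := by
  let σ := (Finite.equivFin ι).symm
  let l := List.ofFn fun j => (b (σ j), m (σ j))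
  let τ : Fin l.length ≃ ι := (finCongr List.length_ofFn).trans σ
  have hl : ∀ j, l.get j = (b (τ j), m (τ j)) := fun j => List.get_ofFn _ j
  refine ⟨l, fun j => e (τ j), ?_, ?_, ?_, ?_, ?_⟩ <;> simp only [hl]
  · exact fun j => hm _
  · exact fun j => h0 _
  · exact fun j => hinj _
  · exact fun j => hcomm _
  · exact fun v hv => (τ.prodCongr (Equiv.refl ℕ)).existsUnique_congr_right.2 (hcover v hv)

theorem exists_isJordanDecomp {V : Type} [Zero V] [Finite V] {T : V → V} (hT : IsF1End T) :
    ∃ l, IsJordanDecomp T l :=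
  exists_isJordanDecomp_of_blocks (ι := {g // IsBlockGen T g}) (fun g => blockType T g)
    (fun g => blockLen T g) (fun g => blockEmb T g) (fun g => (blockLen_spec hT g).1)
    (fun g => blockEmb_zero T g) (fun g => injOn_blockEmb hT g.2.1)
    (fun g _ hk => map_blockEmb hT g.2.1 hk) (fun _ hv => existsUnique_blockEmb hT hv)

section Invariants

variable {V : Type} [Zero V]

open Classical in
noncomputable def component [Fintype V] (T : V → V) (v : V) : Finset V :=
  Finset.univ.filter fun w => w ≠ 0 ∧ ∃ a b, T^[a] v = T^[b] w ∧ T^[a] v ≠ 0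

open Classical in
noncomputable def blockInvariant (T : V → V) (s : Finset V) : Bool × ℕ :=
  (decide (∃ v ∈ s, T v = 0), s.card)

open Classical in
noncomputable def jordanType [Fintype V] (T : V → V) : Multiset (Bool × ℕ) :=
  ((Finset.univ.filter (· ≠ 0)).image (component T)).val.map (blockInvariant T)

end Invariants

structure JordanDecomp {V : Type} [Zero V] (T : V → V) (l : List (Bool × ℕ)) where
  e : Fin l.length → ℕ → V
  one_le : ∀ j, 1 ≤ (l.get j).2
  e_zero : ∀ j, e j 0 = 0
  injOn : ∀ j, InjOn (e j) (Iic (l.get j).2)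
  map_e : ∀ j, ∀ k ≤ (l.get j).2, T (e j k) = e j (modelBlock (l.get j).1 (l.get j).2 k)
  existsUnique : ∀ v : V, v ≠ 0 →
    ∃! jk : Fin l.length × ℕ, 1 ≤ jk.2 ∧ jk.2 ≤ (l.get jk.1).2 ∧ e jk.1 jk.2 = v

namespace JordanDecomp

variable {V : Type} [Zero V] {T : V → V} {l : List (Bool × ℕ)} (d : JordanDecomp T l)
  {j : Fin l.length} {k : ℕ}

theorem e_ne_zero (hk1 : 1 ≤ k) (hk : k ≤ (l.get j).2) : d.e j k ≠ 0 := by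
  intro h
  have := d.injOn j (mem_Iic.2 hk) (mem_Iic.2 (Nat.zero_le _)) (h.trans (d.e_zero j).symm)
  omega

theorem iterate_e (hk : k ≤ (l.get j).2) (n : ℕ) :
    T^[n] (d.e j k) = d.e j ((modelBlock (l.get j).1 (l.get j).2)^[n] k) := by
  induction n with
  | zero => rfl
  | succ n ih =>
    rw [iterate_succ_apply', ih, iterate_succ_apply']
    exact d.map_e j _ (mapsTo_modelBlock.iterate n hk)

theorem iterate_e_eq_e_one (hk : k + 1 ≤ (l.get j).2) : T^[k] (d.e j (k + 1)) = d.e j 1 := by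
  induction k with
  | zero => rfl
  | succ k ih =>
    rw [iterate_succ_apply, d.map_e j _ hk, modelBlock_of_two_le (by omega), Nat.add_sub_cancel]
    exact ih (by omega)

open Classical in
noncomputable def block (j : Fin l.length) : Finset V :=
  (Finset.Icc 1 (l.get j).2).image (d.e j)

theorem mem_block {v : V} : v ∈ d.block j ↔ ∃ k, 1 ≤ k ∧ k ≤ (l.get j).2 ∧ d.e j k = v := by
  simp [block, and_assoc]

theorem e_mem_block (hk1 : 1 ≤ k) (hk : k ≤ (l.get j).2) : d.e j k ∈ d.block j :=
  d.mem_block.2 ⟨k, hk1, hk, rfl⟩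

theorem ne_zero_of_mem_block {v : V} (hv : v ∈ d.block j) : v ≠ 0 := by
  obtain ⟨k, hk1, hk, rfl⟩ := d.mem_block.1 hv
  exact d.e_ne_zero hk1 hk

theorem iterate_mem_block {v : V} (hv : v ∈ d.block j) {n : ℕ} (hn : T^[n] v ≠ 0) :
    T^[n] v ∈ d.block j := by
  obtain ⟨k, -, hk, rfl⟩ := d.mem_block.1 hv
  rw [d.iterate_e hk] at hn ⊢
  refine d.e_mem_block (Nat.one_le_iff_ne_zero.2 fun h0 => hn ?_)
    (mapsTo_modelBlock.iterate n hk)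
  rw [h0, d.e_zero]

theorem eq_of_mem_block {j' : Fin l.length} {v : V} (hv : v ∈ d.block j)
    (hv' : v ∈ d.block j') : j = j' := by
  obtain ⟨k, hk1, hk, rfl⟩ := d.mem_block.1 hv
  obtain ⟨k', hk1', hk', hkk'⟩ := d.mem_block.1 hv'
  exact congrArg Prod.fst ((d.existsUnique _ (d.e_ne_zero hk1 hk)).unique
    (y₁ := (j, k)) (y₂ := (j', k')) ⟨hk1, hk, rfl⟩ ⟨hk1', hk', hkk'⟩)

theorem exists_mem_block {v : V} (hv : v ≠ 0) : ∃ j, v ∈ d.block j := by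
  obtain ⟨⟨j, k⟩, ⟨hk1, hk, hkv⟩, -⟩ := d.existsUnique v hv
  exact ⟨j, d.mem_block.2 ⟨k, hk1, hk, hkv⟩⟩

theorem block_injective : Injective d.block := by
  intro j j' h
  have h1 := d.e_mem_block le_rfl (d.one_le j)
  exact d.eq_of_mem_block h1 (h ▸ h1)

theorem card_block (j : Fin l.length) : (d.block j).card = (l.get j).2 := by
  classical
  rw [block, Finset.card_image_of_injOn, Nat.card_Icc, Nat.add_sub_cancel]
  intro k hk k' hk' h
  simp only [Finset.coe_Icc, mem_Icc] at hk hk'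
  exact d.injOn j (mem_Iic.2 hk.2) (mem_Iic.2 hk'.2) h

theorem blockInvariant_block (j : Fin l.length) :
    blockInvariant T (d.block j) = l.get j := by
  refine Prod.ext ?_ (d.card_block j)
  simp only [blockInvariant]
  cases hb : (l.get j).1
  · simp only [decide_eq_false_iff_not, not_exists, not_and]
    intro v hv hTv
    obtain ⟨k, hk1, hk, rfl⟩ := d.mem_block.1 hv
    rw [d.map_e j k hk, hb] at hTv
    exact d.e_ne_zero (one_le_modelBlock_false (d.one_le j) hk1) (mapsTo_modelBlock hk) hTv
  · simp only [decide_eq_true_iff]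
    refine ⟨d.e j 1, d.e_mem_block le_rfl (d.one_le j), ?_⟩
    rw [d.map_e j 1 (d.one_le j), hb, modelBlock_true_one, d.e_zero]

theorem component_eq_block [Fintype V] {v : V} (hv : v ∈ d.block j) :
    component T v = d.block j := by
  ext w
  simp only [component, Finset.mem_filter, Finset.mem_univ, true_and]
  constructor
  · rintro ⟨hw, a, b, hab, ha⟩
    obtain ⟨j', hj'⟩ := d.exists_mem_block hw
    have h1 := d.iterate_mem_block hv ha
    have h2 := d.iterate_mem_block hj' (hab ▸ ha)
    rwa [d.eq_of_mem_block h1 (hab ▸ h2)]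
  · intro hw
    obtain ⟨k, hk1, hk, rfl⟩ := d.mem_block.1 hv
    obtain ⟨k', hk1', hk', rfl⟩ := d.mem_block.1 hw
    obtain ⟨k, rfl⟩ := Nat.exists_eq_add_of_le' hk1
    obtain ⟨k', rfl⟩ := Nat.exists_eq_add_of_le' hk1'
    refine ⟨d.e_ne_zero hk1' hk', k, k', ?_, ?_⟩
    · rw [d.iterate_e_eq_e_one hk, d.iterate_e_eq_e_one hk']
    · rw [d.iterate_e_eq_e_one hk]
      exact d.e_ne_zero le_rfl (d.one_le j)

open Classical in
theorem image_component [Fintype V] :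
    (Finset.univ.filter (· ≠ 0)).image (component T) = Finset.univ.image d.block := by
  ext s
  simp only [Finset.mem_image, Finset.mem_filter, Finset.mem_univ, true_and]
  constructor
  · rintro ⟨v, hv, rfl⟩
    obtain ⟨j, hj⟩ := d.exists_mem_block hv
    exact ⟨j, (d.component_eq_block hj).symm⟩
  · rintro ⟨j, rfl⟩
    have h1 := d.e_mem_block le_rfl (d.one_le j)
    exact ⟨_, d.ne_zero_of_mem_block h1, d.component_eq_block h1⟩

open Classical in
theorem coe_eq_jordanType [Fintype V] (d : JordanDecomp T l) :
    (l : Multiset (Bool × ℕ)) = jordanType T := by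
  rw [jordanType, d.image_component, Finset.image_val_of_injOn d.block_injective.injOn,
    Multiset.map_map]
  conv_lhs => rw [← List.ofFn_get l, ← Fin.univ_val_map]
  congr 1
  funext j
  exact (d.blockInvariant_block j).symm

end JordanDecomp

theorem IsJordanDecomp.coe_eq_jordanType {V : Type} [Zero V] [Fintype V] {T : V → V}
    {l : List (Bool × ℕ)} (hl : IsJordanDecomp T l) :
    (l : Multiset (Bool × ℕ)) = jordanType T := by
  obtain ⟨e, hm, h0, hinj, hcomm, hcover⟩ := hl
  exact JordanDecomp.coe_eq_jordanType ⟨e, hm, h0, hinj, hcomm, hcover⟩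

/-- Jordan normal form over `F₁`: every endomorphism of a finite pointed
set decomposes as a direct sum of blocks each equivalent to a nilpotent block `N_m` or a
cyclic block `C_m`, uniquely up to reordering of the summands. -/
theorem stmt2 {V : Type} [Zero V] [Fintype V] (T : V → V) (hT : IsF1End T) :
    ∃ l : List (Bool × ℕ), IsJordanDecomp T l ∧
      ∀ l' : List (Bool × ℕ), IsJordanDecomp T l' →
        (l' : Multiset (Bool × ℕ)) = (l : Multiset (Bool × ℕ)) := by
  obtain ⟨l, hl⟩ := exists_isJordanDecomp hT
  exact ⟨l, hl, fun l' hl' => hl'.coe_eq_jordanType.trans hl.coe_eq_jordanType.symm⟩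
end

section
/- For an object V of Vect_{F_1} and an endomorphism T of V, the set Nil := {x ∈ V : T^n(x) = 0_V for some n ≥ 0} and its complement Perm := V \ Nil (together with 0_V) are both T-invariant, and V = Nil ⊕ Perm as a T-invariant direct sum decomposition; moreover T restricted to Perm is a bijection of Perm. -/
/-- For `T ∈ End(V)` in `Vect_{F₁}`, `Nil = {x | T^n x = 0 for some n}` and
`Perm = (V \ Nil) ∪ {0}` are `T`-invariant, `V = Nil ⊕ Perm` (union with intersection
`{0}`), and `T` restricted to `Perm` is a bijection of `Perm`. -/
theorem stmt3 {V : Type} [Zero V] [Fintype V] (T : V → V) (hT : IsF1End T)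
    (Nil Perm : Set V)
    (hNil : Nil = {x : V | ∃ n : ℕ, T^[n] x = 0})
    (hPerm : Perm = {x : V | x = 0 ∨ ¬ ∃ n : ℕ, T^[n] x = 0}) :
    T '' Nil ⊆ Nil ∧ T '' Perm ⊆ Perm ∧
      Nil ∪ Perm = Set.univ ∧ Nil ∩ Perm = {0} ∧
      Set.BijOn T Perm Perm := by
  obtain ⟨hT0, hTinj⟩ := hT
  subst hNil hPerm
  have h0Nil : (0 : V) ∈ {x : V | ∃ n : ℕ, T^[n] x = 0} := ⟨0, rfl⟩
  have hNilInv : T '' {x : V | ∃ n : ℕ, T^[n] x = 0} ⊆ {x : V | ∃ n : ℕ, T^[n] x = 0} := by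
    rintro y ⟨x, ⟨n, hn⟩, rfl⟩
    cases n with
    | zero => exact ⟨0, by simp [show x = 0 from hn, hT0]⟩
    | succ n => exact ⟨n, by rwa [Function.iterate_succ_apply] at hn⟩
  have hPermMaps : Set.MapsTo T {x : V | x = 0 ∨ ¬ ∃ n : ℕ, T^[n] x = 0}
      {x : V | x = 0 ∨ ¬ ∃ n : ℕ, T^[n] x = 0} := by
    rintro x (rfl | hx)
    · left; exact hT0
    · right
      rintro ⟨n, hn⟩
      exact hx ⟨n + 1, by rwa [Function.iterate_succ_apply]⟩
  have hInter : {x : V | ∃ n : ℕ, T^[n] x = 0} ∩ {x : V | x = 0 ∨ ¬ ∃ n : ℕ, T^[n] x = 0}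
      = ({0} : Set V) := by
    ext x
    constructor
    · rintro ⟨hx, (rfl | hx')⟩
      · rfl
      · exact absurd hx hx'
    · rintro rfl
      exact ⟨h0Nil, Or.inl rfl⟩
  have hInj : Set.InjOn T {x : V | x = 0 ∨ ¬ ∃ n : ℕ, T^[n] x = 0} := by
    intro x hx y hy hxy
    by_cases hz : T x = 0
    · have hxN : x = 0 := by
        rcases hx with rfl | hx
        · rfl
        · exact absurd ⟨1, by simpa using hz⟩ hx
      have hyN : y = 0 := by
        rcases hy with rfl | hy
        · rfl
        · exact absurd ⟨1, by simpa using hxy ▸ hz⟩ hy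
      rw [hxN, hyN]
    · exact hTinj x y hxy hz
  refine ⟨hNilInv, fun y hy => by
      obtain ⟨x, hx, rfl⟩ := hy; exact hPermMaps hx,
    ?_, hInter, ?_⟩
  · ext x
    simp only [Set.mem_union, Set.mem_setOf_eq, Set.mem_univ, iff_true]
    by_cases h : ∃ n : ℕ, T^[n] x = 0
    · exact Or.inl h
    · exact Or.inr (Or.inr h)
  · exact (Set.Finite.injOn_iff_bijOn_of_mapsTo (Set.toFinite _) hPermMaps).mp hInj
end

section
/- Let Q be a quiver and V a nilpotent representation of Q in Vect_{F_1}. If V is simple (contains no proper nonzero subrepresentation), then V is isomorphic to S_i for some vertex i, where S_i is the representation with the one-dimensional space k at vertex i, the zero space at all other vertices, and all edge maps zero. -/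
open scoped Classical

/-- A representation of a quiver `Q` (on vertex type `I`) in `Vect_{F₁}`: a finite
pointed set (realized as a `Finset ℕ` containing the basepoint `0`) at each vertex, and
for each edge a basepoint-preserving map that is injective away from the preimage of the
basepoint (a partial bijection). -/
structure CRep (I : Type) [Quiver I] where
  V : I → Finset ℕ
  zero_mem : ∀ i, 0 ∈ V i
  f : ∀ {i j : I}, (i ⟶ j) → ℕ → ℕ
  mem_f : ∀ {i j : I} (h : i ⟶ j), ∀ x ∈ V i, f h x ∈ V j
  zero_f : ∀ {i j : I} (h : i ⟶ j), f h 0 = 0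
  inj_f : ∀ {i j : I} (h : i ⟶ j), ∀ x ∈ V i, ∀ y ∈ V i,
    f h x = f h y → f h x ≠ 0 → x = y

variable {I : Type} [Quiver I]

/-- The composite of the edge maps of `R` along a path in the quiver. -/
def pathMap (R : CRep I) : ∀ {i j : I}, Quiver.Path i j → ℕ → ℕ
  | _, _, .nil => id
  | _, _, .cons p e => R.f e ∘ pathMap R p

/-- A representation is nilpotent if all composites of edge maps along sufficiently long
paths are the zero map. -/
def CRep.Nilpotent (R : CRep I) : Prop :=
  ∃ N : ℕ, ∀ {i j : I} (p : Quiver.Path i j), N ≤ p.length →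
    ∀ x ∈ R.V i, pathMap R p x = 0

/-- A subrepresentation: a pointed subset at each vertex, stable under all edge maps. -/
structure SubRep (R : CRep I) where
  U : I → Finset ℕ
  zero_mem : ∀ i, 0 ∈ U i
  le : ∀ i, U i ⊆ R.V i
  stable : ∀ {i j : I} (h : i ⟶ j), ∀ x ∈ U i, R.f h x ∈ U j

/-- Isomorphism of representations: vertex-wise pointed bijections commuting with all
edge maps. -/
def CRep.Iso (M N : CRep I) : Prop :=
  ∃ φ : I → ℕ → ℕ,
    (∀ i, φ i 0 = 0) ∧
    (∀ i, Set.BijOn (φ i) (M.V i) (N.V i)) ∧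
    (∀ {i j : I} (h : i ⟶ j), ∀ x ∈ M.V i, φ j (M.f h x) = N.f h (φ i x))

/-- The zero representation. -/
def CRep.IsZero (R : CRep I) : Prop := ∀ i, ∀ x ∈ R.V i, x = 0

/-- A representation is simple if it is nonzero and has no proper nonzero
subrepresentation. -/
def CRep.Simple (R : CRep I) : Prop :=
  ¬ R.IsZero ∧ ∀ U : SubRep R, (∀ i, ∀ x ∈ U.U i, x = 0) ∨ (∀ i, U.U i = R.V i)

lemma pathMap_comp (R : CRep I) {i j k : I} (p : Quiver.Path i j) (q : Quiver.Path j k)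
    (x : ℕ) : pathMap R (p.comp q) x = pathMap R q (pathMap R p x) := by
  induction q with
  | nil => simp [pathMap]
  | cons q e ih => simp [pathMap, Quiver.Path.comp_cons, ih]

/-- a simple nilpotent representation of `Q` in `Vect_{F₁}` is isomorphic to
`S_i` for some vertex `i`: one-dimensional space (cardinality `2` as a pointed set) at
`i`, zero spaces at all other vertices, and all edge maps zero. -/
theorem stmt5 (R : CRep I) (hnil : R.Nilpotent) (hsimple : R.Simple) :
    ∃ i : I, (R.V i).card = 2 ∧ (∀ j : I, j ≠ i → ∀ x ∈ R.V j, x = 0) ∧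
      (∀ {j k : I} (h : j ⟶ k), ∀ x ∈ R.V j, R.f h x = 0) := by
  obtain ⟨hnz, hsub⟩ := hsimple
  -- Step 1: find a nonzero element killed by all edges
  have key : ∀ n : ℕ, ∀ i : I, ∀ x ∈ R.V i, x ≠ 0 →
      (∀ {j : I} (p : Quiver.Path i j), n ≤ p.length → pathMap R p x = 0) →
      ∃ j : I, ∃ y ∈ R.V j, y ≠ 0 ∧ ∀ {k : I} (h : j ⟶ k), R.f h y = 0 := by
    intro n
    induction n with
    | zero =>
      intro i x hx hx0 hp
      have := hp Quiver.Path.nil (Nat.zero_le _)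
      simp [pathMap] at this
      exact absurd this hx0
    | succ n ih =>
      intro i x hx hx0 hp
      by_cases hkill : ∀ {k : I} (h : i ⟶ k), R.f h x = 0
      · exact ⟨i, x, hx, hx0, hkill⟩
      · push_neg at hkill
        obtain ⟨k, h, hne⟩ := hkill
        refine ih k (R.f h x) (R.mem_f h x hx) hne ?_
        intro j p hlen
        have := hp ((Quiver.Path.nil.cons h).comp p) (by
          simp [Quiver.Path.length_comp]; omega)
        rw [pathMap_comp] at this
        simpa [pathMap] using this
  have hex : ∃ i : I, ∃ x ∈ R.V i, x ≠ 0 := by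
    by_contra hc
    push_neg at hc
    exact hnz fun i x hx => hc i x hx
  obtain ⟨i0, x0, hx0, hx0ne⟩ := hex
  obtain ⟨N, hN⟩ := hnil
  obtain ⟨j0, y0, hy0, hy0ne, hy0kill⟩ :=
    key N i0 x0 hx0 hx0ne (fun p hlen => hN p hlen x0 hx0)
  -- Step 2: the "socle" subrep
  let S : SubRep R :=
    { U := fun j => (R.V j).filter (fun y => ∀ {k : I} (h : j ⟶ k), R.f h y = 0)
      zero_mem := fun j => Finset.mem_filter.2 ⟨R.zero_mem j, fun {k} h => R.zero_f h⟩
      le := fun j => Finset.filter_subset _ _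
      stable := by
        intro j k h y hy
        obtain ⟨hyV, hyk⟩ := Finset.mem_filter.1 hy
        rw [hyk h]
        exact Finset.mem_filter.2 ⟨R.zero_mem k, fun {l} h' => R.zero_f h'⟩ }
  have hSne : ¬ (∀ j, ∀ y ∈ S.U j, y = 0) := by
    intro hall
    exact hy0ne (hall j0 y0 (Finset.mem_filter.2 ⟨hy0, @hy0kill⟩))
  have hSfull : ∀ j, S.U j = R.V j := (hsub S).resolve_left hSne
  have hkill : ∀ {j k : I} (h : j ⟶ k), ∀ x ∈ R.V j, R.f h x = 0 := by
    intro j k h x hx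
    have : x ∈ S.U j := (hSfull j).symm ▸ hx
    exact (Finset.mem_filter.1 this).2 h
  -- Step 3: the subrep generated by x0
  let T : SubRep R :=
    { U := fun j => if j = i0 then {0, x0} else {0}
      zero_mem := fun j => by
        by_cases hj : j = i0 <;> simp [hj]
      le := fun j => by
        by_cases hj : j = i0
        · subst hj
          simp only [if_pos rfl]
          intro y hy
          rcases Finset.mem_insert.1 hy with h1 | h1
          · exact h1 ▸ R.zero_mem _
          · exact (Finset.mem_singleton.1 h1) ▸ hx0
        · simp only [if_neg hj]
          intro y hy
          exact (Finset.mem_singleton.1 hy) ▸ R.zero_mem j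
      stable := by
        intro j k h y hy
        rw [hkill h y]
        · by_cases hk : k = i0 <;> simp [hk]
        · by_cases hj : j = i0
          · subst hj
            simp only [if_pos rfl] at hy
            rcases Finset.mem_insert.1 hy with h1 | h1
            · exact h1 ▸ R.zero_mem _
            · exact (Finset.mem_singleton.1 h1) ▸ hx0
          · simp only [if_neg hj] at hy
            exact (Finset.mem_singleton.1 hy) ▸ R.zero_mem j }
  have hTne : ¬ (∀ j, ∀ y ∈ T.U j, y = 0) := by
    intro hall
    exact hx0ne (hall i0 x0 (by simp [T]))
  have hTfull : ∀ j, T.U j = R.V j := (hsub T).resolve_left hTne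
  refine ⟨i0, ?_, ?_, hkill⟩
  · have h1 : ({0, x0} : Finset ℕ) = R.V i0 := by
      rw [← hTfull i0]; simp [T]
    rw [← h1, Finset.card_insert_of_notMem (by simp [Ne.symm hx0ne]),
      Finset.card_singleton]
  · intro j hj x hx
    have h1 : ({0} : Finset ℕ) = R.V j := by
      rw [← hTfull j]; simp [T, hj]
    rw [← h1] at hx
    exact Finset.mem_singleton.1 hx
end

section
/- (Jordan–Hölder for quiver representations over F_1) Let V be a nilpotent representation of a quiver Q in Vect_{F_1}, and let 0 = F_0 ⊂ F_1 ⊂ ... ⊂ F_n = V and 0 = F'_0 ⊂ F'_1 ⊂ ... ⊂ F'_m = V be two filtrations by subrepresentations whose successive quotients are all simple. Then n = m and there is a permutation σ of {1,...,n} such that F_j/F_{j-1} ≅ F'_{σ(j)}/F'_{σ(j)-1} for all j. -/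
open scoped Classical

variable {I : Type} [Quiver I]

/-- The filtration step from subrepresentation `A` to `B` has simple quotient `S_c`
supported at the vertex `c`: `A` and `B` agree away from `c`, and at `c` the subset `B c`
is obtained from `A c` by adding exactly one (nonzero) element.  (Over `F₁` the simple
nilpotent representations are exactly the `S_i`, and two such quotients are isomorphic
iff they are supported at the same vertex.) -/
def JumpAt (R : CRep I) (A B : SubRep R) (c : I) : Prop :=
  (∀ i : I, i ≠ c → A.U i = B.U i) ∧ A.U c ⊆ B.U c ∧ (B.U c).card = (A.U c).card + 1

lemma count_lemma {R : CRep I} {n : ℕ} (F : Fin (n+1) → SubRep R) (c : Fin n → I)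
    (hjump : ∀ j : Fin n, JumpAt R (F j.castSucc) (F j.succ) (c j)) (a : I) :
    ∀ k : Fin (n+1), ((F k).U a).card = ((F 0).U a).card +
      (Finset.univ.filter (fun j : Fin n => (j:ℕ) < (k:ℕ) ∧ c j = a)).card := by
  intro k
  induction k using Fin.induction with
  | zero => simp
  | succ k ih =>
    have hstep : ((F k.succ).U a).card
        = ((F k.castSucc).U a).card + (if c k = a then 1 else 0) := by
      by_cases h : c k = a
      · subst h; simpa using (hjump k).2.2
      · rw [if_neg h, (hjump k).1 a (fun e => h e.symm), Nat.add_zero]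
    have hpred : ∀ j : Fin n, ((j:ℕ) < (k.succ:ℕ) ∧ c j = a)
        ↔ (((j:ℕ) < (k.castSucc:ℕ) ∧ c j = a) ∨ (j = k ∧ c j = a)) := by
      intro j
      simp only [Fin.val_succ, Fin.coe_castSucc]
      constructor
      · rintro ⟨h1, h2⟩
        rcases Nat.lt_succ_iff_lt_or_eq.mp h1 with h | h
        · exact Or.inl ⟨h, h2⟩
        · exact Or.inr ⟨Fin.ext h, h2⟩
      · rintro (⟨h1, h2⟩ | ⟨h1, h2⟩)
        · exact ⟨Nat.lt_succ_of_lt h1, h2⟩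
        · subst h1; exact ⟨Nat.lt_succ_self _, h2⟩
    have hsplit : (Finset.univ.filter (fun j : Fin n => (j:ℕ) < (k.succ:ℕ) ∧ c j = a)).card
        = (Finset.univ.filter (fun j : Fin n => (j:ℕ) < (k.castSucc:ℕ) ∧ c j = a)).card
          + (if c k = a then 1 else 0) := by
      rw [Finset.filter_congr (fun j _ => hpred j), Finset.filter_or,
        Finset.card_union_of_disjoint]
      · congr 1
        by_cases h : c k = a
        · rw [if_pos h]
          have : Finset.univ.filter (fun j : Fin n => j = k ∧ c j = a) = {k} := by
            ext j
            simp only [Finset.mem_filter, Finset.mem_univ, true_and, Finset.mem_singleton]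
            constructor
            · exact fun hj => hj.1
            · rintro rfl; exact ⟨rfl, h⟩
          rw [this, Finset.card_singleton]
        · rw [if_neg h]
          have : Finset.univ.filter (fun j : Fin n => j = k ∧ c j = a) = ∅ := by
            ext j
            simp only [Finset.mem_filter, Finset.mem_univ, true_and, Finset.notMem_empty,
              iff_false]
            rintro ⟨rfl, h2⟩; exact h h2
          simp [this]
      · rw [Finset.disjoint_left]
        intro j hj hj'
        simp only [Finset.mem_filter, Finset.mem_univ, true_and] at hj hj'
        rcases hj' with ⟨rfl, -⟩
        exact absurd hj.1 (by simp)
    rw [hstep, ih, hsplit, Nat.add_assoc]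


/-- Jordan–Hölder over `F₁`: two filtrations of a nilpotent representation
`R` by subrepresentations with simple successive quotients have the same length, and
their simple quotients agree up to a permutation (the quotient at step `j` being the
simple representation supported at the vertex `c j`). -/
theorem stmt6 (R : CRep I) (hnil : R.Nilpotent) (n m : ℕ)
    (F : Fin (n + 1) → SubRep R) (F' : Fin (m + 1) → SubRep R)
    (c : Fin n → I) (c' : Fin m → I)
    (hbot : ∀ i, ∀ x ∈ (F 0).U i, x = 0) (htop : ∀ i, (F (Fin.last n)).U i = R.V i)
    (hbot' : ∀ i, ∀ x ∈ (F' 0).U i, x = 0) (htop' : ∀ i, (F' (Fin.last m)).U i = R.V i)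
    (hjump : ∀ j : Fin n, JumpAt R (F j.castSucc) (F j.succ) (c j))
    (hjump' : ∀ j : Fin m, JumpAt R (F' j.castSucc) (F' j.succ) (c' j)) :
    n = m ∧ ∃ σ : Fin n ≃ Fin m, ∀ j : Fin n, c' (σ j) = c j := by
  have hbotcard : ∀ (k : ℕ) (G : Fin (k+1) → SubRep R)
      (hb : ∀ i, ∀ x ∈ (G 0).U i, x = 0) (a : I), ((G 0).U a).card = 1 := by
    intro k G hb a
    have : (G 0).U a = {0} := by
      ext x
      simp only [Finset.mem_singleton]
      exact ⟨fun hx => hb a x hx, fun hx => hx ▸ (G 0).zero_mem a⟩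
    rw [this, Finset.card_singleton]
  have key : ∀ a : I,
      (Finset.univ.filter (fun j : Fin n => c j = a)).card
        = (Finset.univ.filter (fun j : Fin m => c' j = a)).card := by
    intro a
    have h1 := count_lemma F c hjump a (Fin.last n)
    have h2 := count_lemma F' c' hjump' a (Fin.last m)
    rw [htop a, hbotcard n F hbot a] at h1
    rw [htop' a, hbotcard m F' hbot' a] at h2
    have e1 : Finset.univ.filter (fun j : Fin n => (j:ℕ) < ((Fin.last n):ℕ) ∧ c j = a)
        = Finset.univ.filter (fun j : Fin n => c j = a) := by
      apply Finset.filter_congr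
      intro j _
      simp [Fin.val_last, j.isLt]
    have e2 : Finset.univ.filter (fun j : Fin m => (j:ℕ) < ((Fin.last m):ℕ) ∧ c' j = a)
        = Finset.univ.filter (fun j : Fin m => c' j = a) := by
      apply Finset.filter_congr
      intro j _
      simp [Fin.val_last, j.isLt]
    rw [e1] at h1
    rw [e2] at h2
    omega
  have hcard : ∀ a : I, Fintype.card (c ⁻¹' {a}) = Fintype.card (c' ⁻¹' {a}) := by
    intro a
    have hc1 : Fintype.card (c ⁻¹' {a}) = (Finset.univ.filter (fun j : Fin n => c j = a)).card := by
      rw [Fintype.card_subtype]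
      simp only [Set.mem_preimage, Set.mem_singleton_iff]
    have hc2 : Fintype.card (c' ⁻¹' {a}) = (Finset.univ.filter (fun j : Fin m => c' j = a)).card := by
      rw [Fintype.card_subtype]
      simp only [Set.mem_preimage, Set.mem_singleton_iff]
    rw [hc1, hc2, key a]
  have e : ∀ a : I, (c ⁻¹' {a}) ≃ (c' ⁻¹' {a}) := fun a => Fintype.equivOfCardEq (hcard a)
  refine ⟨?_, Equiv.ofFiberEquiv e, fun j => Equiv.ofFiberEquiv_map e j⟩
  have := Fintype.card_congr (Equiv.ofFiberEquiv e)
  simpa using this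
end

section
/- Let Q be a quiver whose underlying unoriented graph is a tree. Then every indecomposable representation V of Q in Vect_{F_1} has dimension vector with all entries equal to 0 or 1, the support of V (vertices with nonzero space) is a connected subgraph of Q, and every nonzero edge map between one-dimensional spaces in the support is an isomorphism. -/
open scoped Classical

variable {I : Type} [Quiver I]

/-- Indecomposable: nonzero, and not an (internal) direct sum of two nonzero
subrepresentations. -/
def CRep.Indecomposable (R : CRep I) : Prop :=
  ¬ R.IsZero ∧
    ¬ ∃ A B : SubRep R, (¬ ∀ i, ∀ x ∈ A.U i, x = 0) ∧ (¬ ∀ i, ∀ x ∈ B.U i, x = 0) ∧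
      (∀ i, A.U i ∪ B.U i = R.V i) ∧ (∀ i, A.U i ∩ B.U i = {0})

/-- The underlying unoriented simple graph of the quiver: `i` and `j` are adjacent iff
`i ≠ j` and there is an edge between them in either direction. -/
def underlyingGraph (I : Type) [Quiver I] : SimpleGraph I where
  Adj i j := i ≠ j ∧ (Nonempty (i ⟶ j) ∨ Nonempty (j ⟶ i))
  symm := by
    constructor
    intro i j hij
    exact ⟨hij.1.symm, hij.2.symm⟩
  loopless := by
    constructor
    intro i hi
    exact hi.1 rfl

/-- The support of a representation: vertices with nonzero space. -/
def suppRep (R : CRep I) : Set I := {i : I | ∃ x ∈ R.V i, x ≠ 0}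

/-!
The nonzero elements of a representation `R` form its coefficient graph, in which `x` at `i`
is joined to `f e x` at `j` for every edge `e : i ⟶ j`. If `R` is indecomposable this graph is
connected: a connected component and its complement span complementary subrepresentations.
Because the edge maps are partial bijections and `Q` has no multiple edges, the projection of
the coefficient graph to the tree `Q` is locally injective, and a locally injective graph map
into a forest sends paths to paths. So two nonzero elements over the same vertex are equal,
two over adjacent vertices are related by the edge map, and the support, being the image of a
connected graph, is connected.
-/

namespace SimpleGraph

variable {V W : Type*} {G : SimpleGraph V} {H : SimpleGraph W}

def Hom.LocallyInjective (φ : G →g H) : Prop :=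
  ∀ ⦃m a b : V⦄, G.Adj m a → G.Adj m b → φ a = φ b → a = b

namespace Hom.LocallyInjective

variable {φ : G →g H} (hφ : φ.LocallyInjective) (hH : H.IsAcyclic)
include hφ hH

theorem map_isPath {u v : V} {p : G.Walk u v} (hp : p.IsPath) : (p.map φ).IsPath := by
  induction p with
  | nil => exact Walk.IsPath.nil
  | @cons u w v h p ih =>
    rw [Walk.cons_isPath_iff] at hp
    rw [Walk.map_cons, Walk.cons_isPath_iff]
    refine ⟨ih hp.1, fun hmem => ?_⟩
    -- in a forest, `φ u` could only reappear as the second vertex of the image path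
    have hsnd : φ u = φ p.snd :=
      (hH.eq_snd_of_adj_start (ih hp.1) (φ.map_adj h).symm hmem).trans (Walk.getVert_map _ _ _)
    cases p with
    | nil => exact (φ.map_adj h).ne hsnd
    | cons h' p' =>
      obtain rfl := hφ h.symm h' (by simpa using hsnd)
      simp at hp

theorem eq_of_reachable {a b : V} (hab : G.Reachable a b) (h : φ a = φ b) : a = b := by
  classical
  obtain ⟨p, hp⟩ := hab.some.toPath
  have hq : ((p.map φ).copy rfl h.symm).IsPath := by
    rw [Walk.isPath_copy]
    exact hφ.map_isPath hH hp
  exact (by simpa using Walk.isPath_iff_nil.mp hq : p.Nil).eq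

theorem adj_of_reachable {a b : V} (hab : G.Reachable a b) (h : H.Adj (φ a) (φ b)) :
    G.Adj a b := by
  classical
  obtain ⟨p, hp⟩ := hab.some.toPath
  have hq := (hH.subsingleton_path _ _).elim ⟨_, hφ.map_isPath hH hp⟩ (Path.singleton h)
  have hlen : (p.map φ).length = 1 := congrArg (fun q : H.Path _ _ => q.1.length) hq
  exact Walk.adj_of_length_eq_one (p := p) (by rwa [Walk.length_map] at hlen)

end Hom.LocallyInjective
end SimpleGraph

theorem Quiver.ne_of_hom (noloops : ∀ i : I, IsEmpty (i ⟶ i)) {i j : I} (e : i ⟶ j) :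
    i ≠ j := by
  rintro rfl
  exact (noloops i).false e

section
variable (nomult : ∀ i j : I, Subsingleton ((i ⟶ j) ⊕ (j ⟶ i)))
include nomult

theorem Quiver.hom_eq_of_subsingleton {i j : I} (e e' : i ⟶ j) : e = e' :=
  Sum.inl_injective ((nomult i j).elim (.inl e) (.inl e'))

theorem Quiver.isEmpty_hom_of_subsingleton {i j : I} (e : i ⟶ j) : IsEmpty (j ⟶ i) :=
  ⟨fun e' => Sum.inl_ne_inr ((nomult i j).elim (.inl e) (.inr e'))⟩

end

namespace CRep

variable (R : CRep I)

abbrev NonzeroElem : Type := {a : I × ℕ // a.2 ∈ R.V a.1 ∧ a.2 ≠ 0}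

/-- The coefficient quiver of `R` with its orientation forgotten. -/
def coeffGraph : SimpleGraph R.NonzeroElem :=
  SimpleGraph.fromRel fun a b => ∃ e : a.1.1 ⟶ b.1.1, R.f e a.1.2 = b.1.2

def coeffGraphProj (noloops : ∀ i : I, IsEmpty (i ⟶ i)) :
    R.coeffGraph →g (underlyingGraph I).induce (suppRep R) where
  toFun a := ⟨a.1.1, a.1.2, a.2⟩
  map_rel' := by
    rintro a b ⟨-, ⟨e, -⟩ | ⟨e, -⟩⟩
    · exact ⟨Quiver.ne_of_hom noloops e, .inl ⟨e⟩⟩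
    · exact ⟨(Quiver.ne_of_hom noloops e).symm, .inr ⟨e⟩⟩

theorem coeffGraphProj_surjective (noloops : ∀ i : I, IsEmpty (i ⟶ i)) :
    Function.Surjective (R.coeffGraphProj noloops) := by
  rintro ⟨i, x, hx⟩
  exact ⟨⟨(i, x), hx⟩, rfl⟩

theorem coeffGraphProj_locallyInjective (noloops : ∀ i : I, IsEmpty (i ⟶ i))
    (nomult : ∀ i j : I, Subsingleton ((i ⟶ j) ⊕ (j ⟶ i))) :
    (R.coeffGraphProj noloops).LocallyInjective := by
  rintro ⟨⟨k, z⟩, hz⟩ ⟨⟨i, x⟩, hx⟩ ⟨⟨j, y⟩, hy⟩ hkx hky hij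
  obtain rfl : i = j := congrArg Subtype.val hij
  suffices x = y by subst this; rfl
  obtain ⟨-, ⟨e₁, h₁⟩ | ⟨e₁, h₁⟩⟩ := hkx <;> obtain ⟨-, ⟨e₂, h₂⟩ | ⟨e₂, h₂⟩⟩ := hky
  all_goals dsimp only at e₁ e₂ h₁ h₂ hz hx hy
  · rw [← h₁, ← h₂, Quiver.hom_eq_of_subsingleton nomult e₁ e₂]
  · exact (Quiver.isEmpty_hom_of_subsingleton nomult e₁).elim e₂
  · exact (Quiver.isEmpty_hom_of_subsingleton nomult e₂).elim e₁
  · rw [Quiver.hom_eq_of_subsingleton nomult e₁ e₂] at h₁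
    exact R.inj_f e₂ x hx.1 y hy.1 (h₁.trans h₂.symm) (h₁ ▸ hz.2)

noncomputable def subRepOfClosed (P : R.NonzeroElem → Prop)
    (hP : ∀ ⦃a b⦄, R.coeffGraph.Adj a b → P a → P b) : SubRep R where
  U i := insert 0 ((R.V i).filter fun x => ∃ h : x ∈ R.V i ∧ x ≠ 0, P ⟨(i, x), h⟩)
  zero_mem _ := Finset.mem_insert_self _ _
  le i := Finset.insert_subset (R.zero_mem i) (Finset.filter_subset _ _)
  stable := by
    intro i j e x hx
    rw [Finset.mem_insert, Finset.mem_filter] at hx ⊢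
    by_cases hy0 : R.f e x = 0
    · exact .inl hy0
    obtain rfl | ⟨-, hx, hPx⟩ := hx
    · exact absurd (R.zero_f e) hy0
    have hy : R.f e x ∈ R.V j := R.mem_f e x hx.1
    refine .inr ⟨hy, ⟨hy, hy0⟩, ?_⟩
    obtain hab | hab := eq_or_ne (⟨(i, x), hx⟩ : R.NonzeroElem) ⟨(j, R.f e x), hy, hy0⟩
    · exact hab ▸ hPx
    · exact hP ⟨hab, .inl ⟨e, rfl⟩⟩ hPx

theorem mem_subRepOfClosed {P : R.NonzeroElem → Prop}
    {hP : ∀ ⦃a b⦄, R.coeffGraph.Adj a b → P a → P b} {i : I} {x : ℕ} :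
    x ∈ (R.subRepOfClosed P hP).U i ↔ x = 0 ∨ ∃ h : x ∈ R.V i ∧ x ≠ 0, P ⟨(i, x), h⟩ := by
  simp only [subRepOfClosed, Finset.mem_insert, Finset.mem_filter]
  grind

theorem Indecomposable.coeffGraph_connected {R : CRep I} (hR : R.Indecomposable) :
    R.coeffGraph.Connected := by
  obtain ⟨a₀⟩ : Nonempty R.NonzeroElem := by
    obtain ⟨i, x, hx, hx0⟩ : ∃ i, ∃ x ∈ R.V i, x ≠ 0 := by
      simpa [IsZero] using hR.1
    exact ⟨⟨(i, x), hx, hx0⟩⟩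
  suffices h : ∀ b, R.coeffGraph.Reachable a₀ b from
    { preconnected a b := (h a).symm.trans (h b), nonempty := ⟨a₀⟩ }
  by_contra! ⟨b₀, hb₀⟩
  refine hR.2 ⟨R.subRepOfClosed (R.coeffGraph.Reachable a₀)
      fun _ _ hab h => h.trans hab.reachable,
    R.subRepOfClosed (¬ R.coeffGraph.Reachable a₀ ·)
      fun _ _ hab h h' => h (h'.trans hab.symm.reachable),
    ?_, ?_, ?_, ?_⟩
  · exact fun h => a₀.2.2 (h _ _ (R.mem_subRepOfClosed.mpr (.inr ⟨a₀.2, .rfl⟩)))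
  · exact fun h => b₀.2.2 (h _ _ (R.mem_subRepOfClosed.mpr (.inr ⟨b₀.2, hb₀⟩)))
  · intro i
    ext x
    simp only [Finset.mem_union, mem_subRepOfClosed]
    grind [R.zero_mem]
  · intro i
    ext x
    simp only [Finset.mem_inter, mem_subRepOfClosed, Finset.mem_singleton]
    grind

section Tree

variable {R : CRep I} (noloops : ∀ i : I, IsEmpty (i ⟶ i))
  (nomult : ∀ i j : I, Subsingleton ((i ⟶ j) ⊕ (j ⟶ i)))
  (hT : (underlyingGraph I).IsAcyclic) (hR : R.Indecomposable)
include noloops nomult hT hR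

theorem Indecomposable.eq_of_ne_zero {i : I} {x y : ℕ} (hx : x ∈ R.V i) (hx0 : x ≠ 0)
    (hy : y ∈ R.V i) (hy0 : y ≠ 0) : x = y := by
  have := (R.coeffGraphProj_locallyInjective noloops nomult).eq_of_reachable (hT.induce _)
    (hR.coeffGraph_connected ⟨(i, x), hx, hx0⟩ ⟨(i, y), hy, hy0⟩) rfl
  exact congrArg (·.1.2) this

theorem Indecomposable.card_le_two (i : I) : (R.V i).card ≤ 2 := by
  have : ((R.V i).erase 0).card ≤ 1 := Finset.card_le_one.mpr fun x hx y hy => by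
    rw [Finset.mem_erase] at hx hy
    exact hR.eq_of_ne_zero noloops nomult hT hx.2 hx.1 hy.2 hy.1
  rw [← Finset.card_erase_add_one (R.zero_mem i)]
  omega

theorem Indecomposable.V_eq_pair {i : I} {x : ℕ} (hx : x ∈ R.V i) (hx0 : x ≠ 0) :
    R.V i = {0, x} := by
  ext y
  rw [Finset.mem_insert, Finset.mem_singleton]
  refine ⟨fun hy => or_iff_not_imp_left.mpr fun hy0 => ?_, ?_⟩
  · exact hR.eq_of_ne_zero noloops nomult hT hy hy0 hx hx0
  · rintro (rfl | rfl)
    exacts [R.zero_mem i, hx]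

theorem Indecomposable.f_eq_of_ne_zero {i j : I} (e : i ⟶ j) {x y : ℕ} (hx : x ∈ R.V i)
    (hx0 : x ≠ 0) (hy : y ∈ R.V j) (hy0 : y ≠ 0) : R.f e x = y := by
  obtain ⟨-, ⟨e', he'⟩ | ⟨e', -⟩⟩ :=
    (R.coeffGraphProj_locallyInjective noloops nomult).adj_of_reachable (hT.induce _)
      (hR.coeffGraph_connected ⟨(i, x), hx, hx0⟩ ⟨(j, y), hy, hy0⟩)
      ⟨Quiver.ne_of_hom noloops e, .inl ⟨e⟩⟩
  · rwa [Quiver.hom_eq_of_subsingleton nomult e e']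
  · exact (Quiver.isEmpty_hom_of_subsingleton nomult e).elim e'

theorem Indecomposable.bijOn_f {i j : I} (e : i ⟶ j) (hi : i ∈ suppRep R)
    (hj : j ∈ suppRep R) : Set.BijOn (R.f e) (R.V i) (R.V j) := by
  obtain ⟨x, hx, hx0⟩ := hi
  obtain ⟨y, hy, hy0⟩ := hj
  have hfx := hR.f_eq_of_ne_zero noloops nomult hT e hx hx0 hy hy0
  rw [hR.V_eq_pair noloops nomult hT hx hx0, hR.V_eq_pair noloops nomult hT hy hy0]
  have hinj : Set.InjOn (R.f e) {0, x} := Set.injOn_pair.mpr fun h => by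
    rw [R.zero_f, hfx] at h
    exact absurd h.symm hy0
  simpa [Set.image_pair, R.zero_f, hfx] using hinj.bijOn_image

end Tree

end CRep

/-- if the underlying unoriented graph of `Q` is a tree (no self-loops, no
multiple edges, connected and acyclic), then every indecomposable representation of `Q`
in `Vect_{F₁}` has all entries of its dimension vector equal to `0` or `1` (each pointed
set has at most `2` elements), its support induces a connected subgraph, and every edge
map between (one-dimensional) spaces in the support is an isomorphism. -/
theorem stmt9 (noloops : ∀ i : I, IsEmpty (i ⟶ i))
    (nomult : ∀ i j : I, Subsingleton ((i ⟶ j) ⊕ (j ⟶ i)))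
    (htree : (underlyingGraph I).IsTree)
    (R : CRep I) (hR : R.Indecomposable) :
    (∀ i : I, (R.V i).card ≤ 2) ∧
      ((underlyingGraph I).induce (suppRep R)).Connected ∧
      (∀ {i j : I} (h : i ⟶ j), i ∈ suppRep R → j ∈ suppRep R →
        Set.BijOn (R.f h) (R.V i) (R.V j)) :=
  ⟨hR.card_le_two noloops nomult htree.isAcyclic,
    hR.coeffGraph_connected.map _ (R.coeffGraphProj_surjective noloops),
    hR.bijOn_f noloops nomult htree.isAcyclic⟩
end
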